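/- arXiv:1308.0081 — 5 statements merged into one kernel-verified Lean document; each statement's English description precedes it below -/
import Mathlib

section
/- The only connected 3-regular simple graph in which every edge lies in a triangle is the complete graph K₄. -/
private lemma ncard_triple {V : Type*} {a b c : V} (h1 : a ≠ b) (h2 : a ≠ c) (h3 : b ≠ c) :
    ({a,b,c} : Set V).ncard = 3 := by
  rw [Set.ncard_insert_of_notMem (by simp [h1,h2]) (Set.toFinite _), Set.ncard_pair h3]

private lemma adj_helper {V : Type*} [Fintype V] (G : SimpleGraph V)
    (hreg : ∀ v : V, (G.neighborSet v).ncard = 3)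
    (htri : ∀ u v : V, G.Adj u v → ∃ w : V, G.Adj u w ∧ G.Adj v w)
    {v a b c : V} (hab : a ≠ b) (hac : a ≠ c) (hbc : b ≠ c)
    (hN : G.neighborSet v = {a, b, c}) : G.Adj a b := by
  have hva : G.Adj v a := by rw [← SimpleGraph.mem_neighborSet, hN]; simp
  have hvb : G.Adj v b := by rw [← SimpleGraph.mem_neighborSet, hN]; simp
  have hvc : G.Adj v c := by rw [← SimpleGraph.mem_neighborSet, hN]; simp
  by_contra h
  have hac' : G.Adj a c := by
    obtain ⟨w, hvw, haw⟩ := htri v a hva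
    have hw : w ∈ G.neighborSet v := hvw
    rw [hN] at hw
    rcases hw with h' | h' | h'
    · exact absurd (h' ▸ haw) (G.irrefl)
    · exact absurd (h' ▸ haw) h
    · exact h' ▸ haw
  have hbc' : G.Adj b c := by
    obtain ⟨w, hvw, hbw⟩ := htri v b hvb
    have hw : w ∈ G.neighborSet v := hvw
    rw [hN] at hw
    rcases hw with h' | h' | h'
    · exact absurd (h' ▸ hbw).symm h
    · exact absurd (h' ▸ hbw) (G.irrefl)
    · exact h' ▸ hbw
  have hvna : v ≠ a := hva.ne
  have hvnb : v ≠ b := hvb.ne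
  have hvnc : v ≠ c := hvc.ne
  have hNc : G.neighborSet c = {v, a, b} := by
    refine (Set.eq_of_subset_of_ncard_le ?_ ?_ (Set.toFinite _)).symm
    · intro x hx
      rcases hx with rfl | rfl | rfl
      · exact hvc.symm
      · exact hac'.symm
      · exact hbc'.symm
    · rw [hreg c, ncard_triple hvna hvnb hab]
  have hsub : ¬ (G.neighborSet a ⊆ {v, c}) := by
    intro hs
    have := Set.ncard_le_ncard hs (Set.toFinite _)
    rw [hreg a, Set.ncard_pair hvnc] at this
    omega
  obtain ⟨x, hxa, hxvc⟩ := Set.not_subset.mp hsub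
  have hxv : x ≠ v := fun h' => hxvc (by simp [h'])
  have hxc : x ≠ c := fun h' => hxvc (by simp [h'])
  have hxb : x ≠ b := fun h' => h (h' ▸ hxa)
  have hxna : x ≠ a := fun h' => G.irrefl (h' ▸ hxa)
  have hNa : G.neighborSet a = {v, c, x} := by
    refine (Set.eq_of_subset_of_ncard_le ?_ ?_ (Set.toFinite _)).symm
    · intro y hy
      rcases hy with rfl | rfl | rfl
      · exact hva.symm
      · exact hac'
      · exact hxa
    · rw [hreg a, ncard_triple hvnc (Ne.symm hxv) (Ne.symm hxc)]
  obtain ⟨w, haw, hxw⟩ := htri a x hxa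
  have hw : w ∈ G.neighborSet a := haw
  rw [hNa] at hw
  rcases hw with h' | h' | h'
  · have hx : x ∈ G.neighborSet v := (h' ▸ hxw).symm
    rw [hN] at hx
    rcases hx with h'' | h'' | h''
    · exact hxna h''
    · exact hxb h''
    · exact hxc h''
  · have hx : x ∈ G.neighborSet c := (h' ▸ hxw).symm
    rw [hNc] at hx
    rcases hx with h'' | h'' | h''
    · exact hxv h''
    · exact hxna h''
    · exact hxb h''
  · exact G.irrefl (h' ▸ hxw)

/-- The only connected 3-regular simple graph in which every edge lies in a
triangle is `K₄`. -/
theorem connected_cubic_triangle_property_iff_K4 {V : Type*} [Fintype V]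
    (G : SimpleGraph V) (hconn : G.Connected)
    (hreg : ∀ v : V, (G.neighborSet v).ncard = 3)
    (htri : ∀ u v : V, G.Adj u v → ∃ w : V, G.Adj u w ∧ G.Adj v w) :
    Nonempty (G ≃g (⊤ : SimpleGraph (Fin 4))) := by
  classical
  obtain ⟨v⟩ := hconn.nonempty
  obtain ⟨a, b, c, hab, hac, hbc, hN⟩ := Set.ncard_eq_three.mp (hreg v)
  have hva : G.Adj v a := by rw [← SimpleGraph.mem_neighborSet, hN]; simp
  have hvb : G.Adj v b := by rw [← SimpleGraph.mem_neighborSet, hN]; simp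
  have hvc : G.Adj v c := by rw [← SimpleGraph.mem_neighborSet, hN]; simp
  have hab' : G.Adj a b := adj_helper G hreg htri hab hac hbc hN
  have hac' : G.Adj a c := adj_helper G hreg htri hac hab hbc.symm
    (by rw [hN]; ext y; simp; tauto)
  have hbc' : G.Adj b c := adj_helper G hreg htri hbc (Ne.symm hab) (Ne.symm hac)
    (by rw [hN]; ext y; simp; tauto)
  have hvna : v ≠ a := hva.ne
  have hvnb : v ≠ b := hvb.ne
  have hvnc : v ≠ c := hvc.ne
  have key : ∀ (p q r s : V), q ≠ r → q ≠ s → r ≠ s →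
      G.Adj p q → G.Adj p r → G.Adj p s → G.neighborSet p = {q, r, s} := by
    intro p q r s h4 h5 h6 a1 a2 a3
    refine (Set.eq_of_subset_of_ncard_le ?_ ?_ (Set.toFinite _)).symm
    · intro y hy; rcases hy with rfl | rfl | rfl
      · exact a1
      · exact a2
      · exact a3
    · rw [hreg p, ncard_triple h4 h5 h6]
  have hNa : G.neighborSet a = {v, b, c} := key a v b c hvnb hvnc hbc hva.symm hab' hac'
  have hNb : G.neighborSet b = {v, a, c} := key b v a c hvna hvnc hac hvb.symm hab'.symm hbc'
  have hNc : G.neighborSet c = {v, a, b} := key c v a b hvna hvnb hab hvc.symm hac'.symm hbc'.symm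
  have hstep : ∀ u w : V, (u = v ∨ u = a ∨ u = b ∨ u = c) → G.Adj u w →
      (w = v ∨ w = a ∨ w = b ∨ w = c) := by
    intro u w hu huw
    rcases hu with rfl | rfl | rfl | rfl
    · have hw : w ∈ G.neighborSet u := huw; rw [hN] at hw; simp at hw; tauto
    · have hw : w ∈ G.neighborSet u := huw; rw [hNa] at hw; simp at hw; tauto
    · have hw : w ∈ G.neighborSet u := huw; rw [hNb] at hw; simp at hw; tauto
    · have hw : w ∈ G.neighborSet u := huw; rw [hNc] at hw; simp at hw; tauto
  have hwalk : ∀ x y : V, G.Walk x y → (x = v ∨ x = a ∨ x = b ∨ x = c) →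
      (y = v ∨ y = a ∨ y = b ∨ y = c) := by
    intro x y p
    induction p with
    | nil => exact id
    | cons h q ih => exact fun hx => ih (hstep _ _ hx h)
  have hS : ∀ u : V, u = v ∨ u = a ∨ u = b ∨ u = c := by
    intro u
    obtain ⟨p⟩ := hconn.preconnected v u
    exact hwalk v u p (Or.inl rfl)
  have hcomplete : ∀ x y : V, x ≠ y → G.Adj x y := by
    intro x y hxy
    rcases hS x with rfl | rfl | rfl | rfl <;> rcases hS y with rfl | rfl | rfl | rfl <;>
      first
        | exact absurd rfl hxy
        | exact hva | exact hvb | exact hvc | exact hab' | exact hac' | exact hbc'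
        | exact hva.symm | exact hvb.symm | exact hvc.symm
        | exact hab'.symm | exact hac'.symm | exact hbc'.symm
  let f : V → Fin 4 := fun u => if u = v then 0 else if u = a then 1 else if u = b then 2 else 3
  let g : Fin 4 → V := ![v, a, b, c]
  have hgf : ∀ u, g (f u) = u := by
    intro u
    rcases hS u with rfl | rfl | rfl | rfl <;>
      simp [f, g, hvna, hvnb, hvnc, hab, hac, hbc,
        Ne.symm hvna, Ne.symm hvnb, Ne.symm hvnc, Ne.symm hab, Ne.symm hac, Ne.symm hbc]
  have hfg : ∀ i, f (g i) = i := by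
    intro i
    fin_cases i <;>
      simp [f, g, hvna, hvnb, hvnc, hab, hac, hbc,
        Ne.symm hvna, Ne.symm hvnb, Ne.symm hvnc, Ne.symm hab, Ne.symm hac, Ne.symm hbc]
  let e : V ≃ Fin 4 := ⟨f, g, hgf, hfg⟩
  refine ⟨⟨e, ?_⟩⟩
  intro x y
  simp only [SimpleGraph.top_adj]
  constructor
  · intro h
    exact hcomplete x y (fun h' => h (by rw [h']))
  · intro h hxy
    exact h.ne (e.injective hxy)
end

section
/- For n ≥ 7, the squared n-cycle C_n² contains no eligible triangle; that is, for every triangle T in C_n², removing the three edges of T leaves some edge of C_n² not in a triangle. -/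
set_option maxHeartbeats 1000000 in
private lemma squared_cycle_aux {n : ℕ} (hn : 7 ≤ n) (m : ZMod n) (S : Set (Sym2 (ZMod n)))
    (hS : ∀ x y : ZMod n, s(x, y) ∈ S ↔
      ((x = m - 1 ∧ y = m ∨ x = m ∧ y = m - 1) ∨
       (x = m ∧ y = m + 1 ∨ x = m + 1 ∧ y = m) ∨
       (x = m - 1 ∧ y = m + 1 ∨ x = m + 1 ∧ y = m - 1))) :
    ∃ u v : ZMod n,
      ((SimpleGraph.fromRel (fun i j : ZMod n => i - j = 1 ∨ i - j = 2)).deleteEdges S).Adj u v ∧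
      ∀ w : ZMod n,
        ¬ (((SimpleGraph.fromRel (fun i j : ZMod n => i - j = 1 ∨ i - j = 2)).deleteEdges S).Adj u w ∧
           ((SimpleGraph.fromRel (fun i j : ZMod n => i - j = 1 ∨ i - j = 2)).deleteEdges S).Adj v w) := by
  haveI : NeZero n := ⟨by omega⟩
  have hnat : ∀ k : ℕ, 0 < k → k < 7 → ((k : ℕ) : ZMod n) ≠ 0 := by
    intro k hk hk7 h
    rw [ZMod.natCast_eq_zero_iff] at h
    exact absurd (Nat.le_of_dvd hk h) (by omega)
  have h1z : (1 : ZMod n) ≠ 0 := by exact_mod_cast hnat 1 (by norm_num) (by norm_num)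
  have h2z : (2 : ZMod n) ≠ 0 := by exact_mod_cast hnat 2 (by norm_num) (by norm_num)
  have h3z : (3 : ZMod n) ≠ 0 := by exact_mod_cast hnat 3 (by norm_num) (by norm_num)
  have h4z : (4 : ZMod n) ≠ 0 := by exact_mod_cast hnat 4 (by norm_num) (by norm_num)
  have h5z : (5 : ZMod n) ≠ 0 := by exact_mod_cast hnat 5 (by norm_num) (by norm_num)
  have h6z : (6 : ZMod n) ≠ 0 := by exact_mod_cast hnat 6 (by norm_num) (by norm_num)
  refine ⟨m, m + 2, ?_, ?_⟩
  · rw [SimpleGraph.deleteEdges_adj]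
    refine ⟨?_, ?_⟩
    · rw [SimpleGraph.fromRel_adj]
      exact ⟨fun h => h2z (by linear_combination -h), Or.inr (Or.inr (by ring))⟩
    · intro hmem
      rcases (hS m (m + 2)).mp hmem with (⟨h, h'⟩ | ⟨h, h'⟩) | (⟨h, h'⟩ | ⟨h, h'⟩) | (⟨h, h'⟩ | ⟨h, h'⟩)
      · exact h1z (by linear_combination h)
      · exact h3z (by linear_combination h')
      · exact h1z (by linear_combination h')
      · exact h1z (by linear_combination -h)
      · exact h1z (by linear_combination h)
      · exact h1z (by linear_combination -h)
  · intro w hw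
    rw [SimpleGraph.deleteEdges_adj, SimpleGraph.deleteEdges_adj,
      SimpleGraph.fromRel_adj, SimpleGraph.fromRel_adj] at hw
    obtain ⟨⟨⟨hw1, hr1⟩, hm1⟩, ⟨⟨hw2, hr2⟩, hm2⟩⟩ := hw
    rcases hr1 with (h1 | h1) | (h1 | h1) <;> rcases hr2 with (h2 | h2) | (h2 | h2)
    · exact h2z (by linear_combination -h1 + h2)
    · exact h1z (by linear_combination -h1 + h2)
    · exact h4z (by linear_combination -h1 - h2)
    · exact h5z (by linear_combination -h1 - h2)
    · exact h3z (by linear_combination -h1 + h2)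
    · exact h2z (by linear_combination -h1 + h2)
    · exact h5z (by linear_combination -h1 - h2)
    · exact h6z (by linear_combination -h1 - h2)
    · exact hm1 ((hS m w).mpr (Or.inr (Or.inl (Or.inl ⟨rfl, by linear_combination h1⟩))))
    · exact h1z (by linear_combination -h1 - h2)
    · exact h2z (by linear_combination h1 - h2)
    · exact h3z (by linear_combination h1 - h2)
    · exact h1z (by linear_combination -h1 - h2)
    · exact h2z (by linear_combination -h1 - h2)
    · exact h1z (by linear_combination h1 - h2)
    · exact h2z (by linear_combination h1 - h2)

set_option maxHeartbeats 1000000 in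
private lemma squared_cycle_mem1 {n : ℕ} (m x y : ZMod n) :
    s(x, y) ∈ ({s(m + 1, m), s(m, m - 1), s(m + 1, m - 1)} : Set (Sym2 (ZMod n))) ↔
      ((x = m - 1 ∧ y = m ∨ x = m ∧ y = m - 1) ∨
       (x = m ∧ y = m + 1 ∨ x = m + 1 ∧ y = m) ∨
       (x = m - 1 ∧ y = m + 1 ∨ x = m + 1 ∧ y = m - 1)) := by
  simp only [Set.mem_insert_iff, Set.mem_singleton_iff, Sym2.eq_iff]
  try tauto

set_option maxHeartbeats 1000000 in
private lemma squared_cycle_mem2 {n : ℕ} (m x y : ZMod n) :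
    s(x, y) ∈ ({s(m, m - 1), s(m - 1, m + 1), s(m, m + 1)} : Set (Sym2 (ZMod n))) ↔
      ((x = m - 1 ∧ y = m ∨ x = m ∧ y = m - 1) ∨
       (x = m ∧ y = m + 1 ∨ x = m + 1 ∧ y = m) ∨
       (x = m - 1 ∧ y = m + 1 ∨ x = m + 1 ∧ y = m - 1)) := by
  simp only [Set.mem_insert_iff, Set.mem_singleton_iff, Sym2.eq_iff]
  try tauto

set_option maxHeartbeats 1000000 in
private lemma squared_cycle_mem3 {n : ℕ} (m x y : ZMod n) :
    s(x, y) ∈ ({s(m + 1, m - 1), s(m - 1, m), s(m + 1, m)} : Set (Sym2 (ZMod n))) ↔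
      ((x = m - 1 ∧ y = m ∨ x = m ∧ y = m - 1) ∨
       (x = m ∧ y = m + 1 ∨ x = m + 1 ∧ y = m) ∨
       (x = m - 1 ∧ y = m + 1 ∨ x = m + 1 ∧ y = m - 1)) := by
  simp only [Set.mem_insert_iff, Set.mem_singleton_iff, Sym2.eq_iff]
  try tauto

set_option maxHeartbeats 1000000 in
private lemma squared_cycle_mem4 {n : ℕ} (m x y : ZMod n) :
    s(x, y) ∈ ({s(m, m + 1), s(m + 1, m - 1), s(m, m - 1)} : Set (Sym2 (ZMod n))) ↔
      ((x = m - 1 ∧ y = m ∨ x = m ∧ y = m - 1) ∨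
       (x = m ∧ y = m + 1 ∨ x = m + 1 ∧ y = m) ∨
       (x = m - 1 ∧ y = m + 1 ∨ x = m + 1 ∧ y = m - 1)) := by
  simp only [Set.mem_insert_iff, Set.mem_singleton_iff, Sym2.eq_iff]
  try tauto

set_option maxHeartbeats 1000000 in
private lemma squared_cycle_mem5 {n : ℕ} (m x y : ZMod n) :
    s(x, y) ∈ ({s(m - 1, m), s(m, m + 1), s(m - 1, m + 1)} : Set (Sym2 (ZMod n))) ↔
      ((x = m - 1 ∧ y = m ∨ x = m ∧ y = m - 1) ∨
       (x = m ∧ y = m + 1 ∨ x = m + 1 ∧ y = m) ∨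
       (x = m - 1 ∧ y = m + 1 ∨ x = m + 1 ∧ y = m - 1)) := by
  simp only [Set.mem_insert_iff, Set.mem_singleton_iff, Sym2.eq_iff]
  try tauto

set_option maxHeartbeats 1000000 in
private lemma squared_cycle_mem6 {n : ℕ} (m x y : ZMod n) :
    s(x, y) ∈ ({s(m - 1, m + 1), s(m + 1, m), s(m - 1, m)} : Set (Sym2 (ZMod n))) ↔
      ((x = m - 1 ∧ y = m ∨ x = m ∧ y = m - 1) ∨
       (x = m ∧ y = m + 1 ∨ x = m + 1 ∧ y = m) ∨
       (x = m - 1 ∧ y = m + 1 ∨ x = m + 1 ∧ y = m - 1)) := by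
  simp only [Set.mem_insert_iff, Set.mem_singleton_iff, Sym2.eq_iff]
  try tauto

set_option maxHeartbeats 1000000 in
/-- For `n ≥ 7`, the squared `n`-cycle contains no eligible triangle: removing
the edges of any triangle leaves some edge that lies in no triangle. -/
theorem squared_cycle_no_eligible_triangle (n : ℕ) (hn : 7 ≤ n) :
    let G : SimpleGraph (ZMod n) :=
      SimpleGraph.fromRel (fun i j => i - j = 1 ∨ i - j = 2)
    ∀ a b c : ZMod n, G.Adj a b → G.Adj b c → G.Adj a c →
      ∃ u v : ZMod n,
        (G.deleteEdges {s(a, b), s(b, c), s(a, c)}).Adj u v ∧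
        ∀ w : ZMod n, ¬ ((G.deleteEdges {s(a, b), s(b, c), s(a, c)}).Adj u w ∧
          (G.deleteEdges {s(a, b), s(b, c), s(a, c)}).Adj v w) := by
  intro G a b c hab hbc hac
  haveI : NeZero n := ⟨by omega⟩
  have hnat : ∀ k : ℕ, 0 < k → k < 7 → ((k : ℕ) : ZMod n) ≠ 0 := by
    intro k hk hk7 h
    rw [ZMod.natCast_eq_zero_iff] at h
    exact absurd (Nat.le_of_dvd hk h) (by omega)
  have h1z : (1 : ZMod n) ≠ 0 := by exact_mod_cast hnat 1 (by norm_num) (by norm_num)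
  have h2z : (2 : ZMod n) ≠ 0 := by exact_mod_cast hnat 2 (by norm_num) (by norm_num)
  have h3z : (3 : ZMod n) ≠ 0 := by exact_mod_cast hnat 3 (by norm_num) (by norm_num)
  have h4z : (4 : ZMod n) ≠ 0 := by exact_mod_cast hnat 4 (by norm_num) (by norm_num)
  have h5z : (5 : ZMod n) ≠ 0 := by exact_mod_cast hnat 5 (by norm_num) (by norm_num)
  have h6z : (6 : ZMod n) ≠ 0 := by exact_mod_cast hnat 6 (by norm_num) (by norm_num)
  obtain ⟨hab1, hab2⟩ : a ≠ b ∧ ((a - b = 1 ∨ a - b = 2) ∨ (b - a = 1 ∨ b - a = 2)) :=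
    (SimpleGraph.fromRel_adj _ a b).mp hab
  obtain ⟨hbc1, hbc2⟩ : b ≠ c ∧ ((b - c = 1 ∨ b - c = 2) ∨ (c - b = 1 ∨ c - b = 2)) :=
    (SimpleGraph.fromRel_adj _ b c).mp hbc
  obtain ⟨hac1, hac2⟩ : a ≠ c ∧ ((a - c = 1 ∨ a - c = 2) ∨ (c - a = 1 ∨ c - a = 2)) :=
    (SimpleGraph.fromRel_adj _ a c).mp hac
  have key : ∃ m : ZMod n, ∀ x y : ZMod n,
      s(x, y) ∈ ({s(a, b), s(b, c), s(a, c)} : Set (Sym2 (ZMod n))) ↔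
        ((x = m - 1 ∧ y = m ∨ x = m ∧ y = m - 1) ∨
           (x = m ∧ y = m + 1 ∨ x = m + 1 ∧ y = m) ∨
           (x = m - 1 ∧ y = m + 1 ∨ x = m + 1 ∧ y = m - 1)) := by
    clear hab hbc hac
    rcases hab2 with (h1 | h1) | (h1 | h1) <;> rcases hbc2 with (h2 | h2) | (h2 | h2)
    · have ha : a = b + 1 := by linear_combination h1
      have hc : c = b - 1 := by linear_combination -h2
      subst ha
      subst hc
      exact ⟨b, squared_cycle_mem1 b⟩
    · rcases hac2 with (h3 | h3) | (h3 | h3)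
      · exact (h2z (by linear_combination h3 - h1 - h2)).elim
      · exact (h1z (by linear_combination h3 - h1 - h2)).elim
      · exact (h4z (by linear_combination -h3 - h1 - h2)).elim
      · exact (h5z (by linear_combination -h3 - h1 - h2)).elim
    · exact absurd (show a = c by linear_combination h1 - h2) hac1
    · have hb : b = a - 1 := by linear_combination -h1
      have hc : c = a + 1 := by linear_combination h2 - h1
      subst hb
      subst hc
      exact ⟨a, squared_cycle_mem2 a⟩
    · rcases hac2 with (h3 | h3) | (h3 | h3)
      · exact (h2z (by linear_combination h3 - h1 - h2)).elim
      · exact (h1z (by linear_combination h3 - h1 - h2)).elim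
      · exact (h4z (by linear_combination -h3 - h1 - h2)).elim
      · exact (h5z (by linear_combination -h3 - h1 - h2)).elim
    · rcases hac2 with (h3 | h3) | (h3 | h3)
      · exact (h3z (by linear_combination h3 - h1 - h2)).elim
      · exact (h2z (by linear_combination h3 - h1 - h2)).elim
      · exact (h5z (by linear_combination -h3 - h1 - h2)).elim
      · exact (h6z (by linear_combination -h3 - h1 - h2)).elim
    · have ha : a = c + 1 := by linear_combination h1 - h2
      have hb : b = c - 1 := by linear_combination -h2
      subst ha
      subst hb
      exact ⟨c, squared_cycle_mem3 c⟩
    · exact absurd (show a = c by linear_combination h1 - h2) hac1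
    · exact absurd (show a = c by linear_combination h2 - h1) hac1
    · have hb : b = a + 1 := by linear_combination h1
      have hc : c = a - 1 := by linear_combination h1 - h2
      subst hb
      subst hc
      exact ⟨a, squared_cycle_mem4 a⟩
    · have ha : a = b - 1 := by linear_combination -h1
      have hc : c = b + 1 := by linear_combination h2
      subst ha
      subst hc
      exact ⟨b, squared_cycle_mem5 b⟩
    · rcases hac2 with (h3 | h3) | (h3 | h3)
      · exact (h4z (by linear_combination -h1 - h2 - h3)).elim
      · exact (h5z (by linear_combination -h1 - h2 - h3)).elim
      · exact (h2z (by linear_combination -h1 - h2 + h3)).elim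
      · exact (h1z (by linear_combination -h1 - h2 + h3)).elim
    · have ha : a = c - 1 := by linear_combination h2 - h1
      have hb : b = c + 1 := by linear_combination h2
      subst ha
      subst hb
      exact ⟨c, squared_cycle_mem6 c⟩
    · exact absurd (show a = c by linear_combination h2 - h1) hac1
    · rcases hac2 with (h3 | h3) | (h3 | h3)
      · exact (h4z (by linear_combination -h1 - h2 - h3)).elim
      · exact (h5z (by linear_combination -h1 - h2 - h3)).elim
      · exact (h2z (by linear_combination -h1 - h2 + h3)).elim
      · exact (h1z (by linear_combination -h1 - h2 + h3)).elim
    · rcases hac2 with (h3 | h3) | (h3 | h3)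
      · exact (h5z (by linear_combination -h1 - h2 - h3)).elim
      · exact (h6z (by linear_combination -h1 - h2 - h3)).elim
      · exact (h3z (by linear_combination -h1 - h2 + h3)).elim
      · exact (h2z (by linear_combination -h1 - h2 + h3)).elim
  obtain ⟨m, hm⟩ := key
  exact squared_cycle_aux hn m _ hm
end

section
/- For n ≥ 5, the squared n-cycle C_n² contains no induced subgraph isomorphic to K_{1,1,3} when n ≥ 7; equivalently, C_n² for n ≥ 7 has no vertex whose neighbourhood contains a triangle all of whose vertices have two common neighbours. -/
/-!
The neighbours of a vertex `u` of the circulant graph with jumps `g, 2g` are `u + m • g` with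
`m ∈ {±1, ±2}`, and any three distinct such `m` contain two at distance at most `2`; so the graph
is claw-free. A `K_{1,1,3}` contains an induced claw (either apex with the three independent
vertices), hence cannot be induced in a claw-free graph.
-/

namespace SimpleGraph

variable {V : Type*}

/-- A graph is claw-free if it has no induced `K_{1,3}`. -/
def IsClawFree (G : SimpleGraph V) : Prop :=
  ∀ ⦃u x y z : V⦄, G.Adj u x → G.Adj u y → G.Adj u z → x ≠ y → x ≠ z → y ≠ z →
    G.Adj x y ∨ G.Adj x z ∨ G.Adj y z

theorem IsClawFree.isEmpty_completeMultipartiteGraph_embedding {G : SimpleGraph V}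
    (hG : G.IsClawFree) :
    IsEmpty (completeMultipartiteGraph ![Fin 1, Fin 1, Fin 3] ↪g G) := by
  refine ⟨fun f => ?_⟩
  let x : Fin 3 → V := fun k => f ⟨2, (k : Fin 3)⟩
  have hu (k : Fin 3) : G.Adj (f ⟨0, (0 : Fin 1)⟩) (x k) :=
    f.map_rel_iff.mpr (show (0 : Fin 3) ≠ 2 by decide)
  have hx {k l : Fin 3} (hkl : k ≠ l) : x k ≠ x l :=
    fun h => hkl (eq_of_heq (Sigma.mk.inj_iff.mp (f.injective h)).2)
  have hnadj (k l : Fin 3) : ¬ G.Adj (x k) (x l) :=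
    fun h => (f.map_rel_iff.mp h : (2 : Fin 3) ≠ 2) rfl
  rcases hG (hu 0) (hu 1) (hu 2) (hx (by decide)) (hx (by decide)) (hx (by decide)) with
    h | h | h <;> exact hnadj _ _ h

variable {G : Type*} [AddGroup G]

theorem circulantGraph_adj_iff_exists_zsmul {g x y : G} :
    (circulantGraph {g, 2 • g}).Adj x y ↔
      x ≠ y ∧ ∃ m ∈ ({1, 2, -1, -2} : Set ℤ), x - y = m • g := by
  simp only [circulantGraph_adj, Set.mem_insert_iff, Set.mem_singleton_iff, exists_eq_or_imp,
    exists_eq_left, ofNat_zsmul, one_nsmul, neg_zsmul, ← neg_sub x y, neg_eq_iff_eq_neg]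
  tauto

theorem circulantGraph_isClawFree (g : G) : (circulantGraph {g, 2 • g}).IsClawFree := by
  intro u x y z hx hy hz hxy hxz hyz
  obtain ⟨-, a, ha, hxu⟩ := circulantGraph_adj_iff_exists_zsmul.mp hx.symm
  obtain ⟨-, b, hb, hyu⟩ := circulantGraph_adj_iff_exists_zsmul.mp hy.symm
  obtain ⟨-, c, hc, hzu⟩ := circulantGraph_adj_iff_exists_zsmul.mp hz.symm
  have adj_of_offsets {v w : G} {m k : ℤ} (hv : v - u = m • g) (hw : w - u = k • g)
      (hvw : v ≠ w) (hmk : m - k ∈ ({1, 2, -1, -2} : Set ℤ)) :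
      (circulantGraph {g, 2 • g}).Adj v w :=
    circulantGraph_adj_iff_exists_zsmul.mpr
      ⟨hvw, m - k, hmk, by rw [sub_zsmul, ← hv, ← hw, neg_sub, sub_add_sub_cancel]⟩
  have offsets_ne {v w : G} {m k : ℤ} (hv : v - u = m • g) (hw : w - u = k • g)
      (hvw : v ≠ w) : m ≠ k := by
    rintro rfl
    exact hvw (sub_left_inj.mp (hv.trans hw.symm))
  have hab := offsets_ne hxu hyu hxy
  have hac := offsets_ne hxu hzu hxz
  have hbc := offsets_ne hyu hzu hyz
  have close_pair : a - b ∈ ({1, 2, -1, -2} : Set ℤ) ∨ a - c ∈ ({1, 2, -1, -2} : Set ℤ) ∨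
      b - c ∈ ({1, 2, -1, -2} : Set ℤ) := by
    simp only [Set.mem_insert_iff, Set.mem_singleton_iff] at ha hb hc ⊢
    omega
  rcases close_pair with h | h | h
  exacts [.inl (adj_of_offsets hxu hyu hxy h), .inr (.inl (adj_of_offsets hxu hzu hxz h)),
    .inr (.inr (adj_of_offsets hyu hzu hyz h))]

end SimpleGraph

theorem squared_cycle_no_induced_K113_general (n : ℕ) :
    IsEmpty ((SimpleGraph.completeMultipartiteGraph ![Fin 1, Fin 1, Fin 3]) ↪g
      (SimpleGraph.fromRel (fun i j : ZMod n => i - j = 1 ∨ i - j = 2))) := by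
  have squaredCycle_eq : SimpleGraph.fromRel (fun i j : ZMod n => i - j = 1 ∨ i - j = 2) =
      SimpleGraph.circulantGraph {1, 2 • 1} := by
    rw [nsmul_one]
    rfl
  rw [squaredCycle_eq]
  exact (SimpleGraph.circulantGraph_isClawFree 1).isEmpty_completeMultipartiteGraph_embedding

/-- For `n ≥ 7`, the squared `n`-cycle contains no induced subgraph isomorphic
to `K_{1,1,3}`. -/
theorem squared_cycle_no_induced_K113 (n : ℕ) (hn : 7 ≤ n) :
    IsEmpty ((SimpleGraph.completeMultipartiteGraph ![Fin 1, Fin 1, Fin 3]) ↪g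
      (SimpleGraph.fromRel (fun i j : ZMod n => i - j = 1 ∨ i - j = 2))) :=
  squared_cycle_no_induced_K113_general n
end

section
/- If G is a 4-regular simple graph in which every edge lies in a triangle, and T = {xy, yz, zx} is an eligible triangle of G, then the graph G' obtained by Operation 1 — deleting the edges of T, adding three new vertices u, v, w forming a triangle, and adding edges ux, uy, vy, vz, wz, wx — is 4-regular and every edge of G' lies in a triangle. -/
/-!
Operation 1 is the gluing of `G - T` and a triangle `uvw` in which the new vertex attached to
the side `e` of `T` is joined to both ends of `e`. An old vertex thus loses one edge for every
side of `T` through it and gains one new neighbour for it, so its degree is unchanged; each new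
vertex has two old and two new neighbours. Edges of `G - T` lie in triangles by eligibility,
edges of `uvw` in `uvw`, and an edge from a new vertex to an old vertex `p` lies in a triangle
with the other new vertex attached to `p`, since `p` lies on two sides of `T`.
-/

open Function Set

namespace Sym2

variable {V : Type*}

lemma encard_setOf_mk_mem (S : Set (Sym2 V)) (p : V) :
    {q | s(p, q) ∈ S}.encard = {e ∈ S | p ∈ e}.encard := by
  rw [← (mkEmbedding p).injective.encard_image]
  congr 1
  ext e
  constructor
  · rintro ⟨q, hq, rfl⟩
    exact ⟨hq, mem_mk_left p q⟩
  · rintro ⟨he, hp⟩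
    exact ⟨Mem.other hp, show s(p, _) ∈ S by rwa [other_spec hp], other_spec hp⟩

lemma encard_setOf_mem_range_of_injective {ι : Type*} {f : ι → Sym2 V} (hf : Injective f)
    (p : V) : {e ∈ range f | p ∈ e}.encard = {i | p ∈ f i}.encard := by
  rw [← hf.encard_image]
  congr 1
  ext e
  constructor
  · rintro ⟨⟨i, rfl⟩, hp⟩
    exact ⟨i, hp, rfl⟩
  · rintro ⟨i, hp, rfl⟩
    exact ⟨⟨i, rfl⟩, hp⟩

lemma encard_setOf_mem {e : Sym2 V} (he : ¬e.IsDiag) : {p | p ∈ e}.encard = 2 := by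
  induction e using Sym2.ind with
  | h x y => rw [← encard_pair he, ← coe_mk]; rfl

end Sym2

section triangleSides

variable {V : Type*}

def triangleSides (x y z : V) : Fin 3 → Sym2 V := ![s(x, y), s(y, z), s(x, z)]

lemma range_triangleSides (x y z : V) :
    range (triangleSides x y z) = {s(x, y), s(y, z), s(x, z)} := by
  rw [triangleSides, Matrix.range_cons, Matrix.range_cons_cons_empty, singleton_union]

variable {x y z : V}

lemma triangleSides_injective (hxy : x ≠ y) (hyz : y ≠ z) (hxz : x ≠ z) :
    Injective (triangleSides x y z) := by
  intro i j h
  fin_cases i <;> fin_cases j <;> simp [triangleSides] at h ⊢ <;> grind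

lemma not_isDiag_triangleSides (hxy : x ≠ y) (hyz : y ≠ z) (hxz : x ≠ z) (i : Fin 3) :
    ¬(triangleSides x y z i).IsDiag := by
  fin_cases i <;> simpa [triangleSides]

lemma exists_ne_mem_triangleSides {p : V} {i : Fin 3} (hp : p ∈ triangleSides x y z i) :
    ∃ j, i ≠ j ∧ p ∈ triangleSides x y z j := by
  fin_cases i <;> simp [triangleSides, Fin.exists_fin_succ] at hp ⊢ <;> tauto

end triangleSides

namespace SimpleGraph

variable {V W : Type*}

def EdgesInTriangles (G : SimpleGraph V) : Prop :=
  ∀ u v, G.Adj u v → ∃ w, G.Adj u w ∧ G.Adj v w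

lemma edgesInTriangles_top_fin_three : (⊤ : SimpleGraph (Fin 3)).EdgesInTriangles := by
  unfold EdgesInTriangles
  decide

lemma encard_neighborSet_deleteEdges_add {G : SimpleGraph V} {S : Set (Sym2 V)}
    (hS : S ⊆ G.edgeSet) (p : V) :
    ((G.deleteEdges S).neighborSet p).encard + {q | s(p, q) ∈ S}.encard =
      (G.neighborSet p).encard := by
  have hsub : {q | s(p, q) ∈ S} ⊆ G.neighborSet p := fun q hq => hS hq
  rw [← encard_sdiff_add_encard_of_subset hsub]
  congr 2
  ext q
  simp

def glue (H : SimpleGraph V) (K : SimpleGraph W) (R : W → V → Prop) :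
    SimpleGraph (V ⊕ W) where
  Adj
    | .inl p, .inl q => H.Adj p q
    | .inl p, .inr i => R i p
    | .inr i, .inl p => R i p
    | .inr i, .inr j => K.Adj i j
  symm := ⟨by rintro (p | i) (q | j) h <;> first | exact h.symm | exact h⟩
  loopless := ⟨by rintro (p | i) h; exacts [H.irrefl h, K.irrefl h]⟩

section glue

variable {H : SimpleGraph V} {K : SimpleGraph W} {R : W → V → Prop}

@[simp] lemma glue_adj_inl_inl {p q : V} : (glue H K R).Adj (.inl p) (.inl q) ↔ H.Adj p q :=
  .rfl

@[simp] lemma glue_adj_inl_inr {p : V} {i : W} : (glue H K R).Adj (.inl p) (.inr i) ↔ R i p :=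
  .rfl

@[simp] lemma glue_adj_inr_inl {p : V} {i : W} : (glue H K R).Adj (.inr i) (.inl p) ↔ R i p :=
  .rfl

@[simp] lemma glue_adj_inr_inr {i j : W} : (glue H K R).Adj (.inr i) (.inr j) ↔ K.Adj i j :=
  .rfl

lemma glue_neighborSet_inl (p : V) :
    (glue H K R).neighborSet (.inl p) = .inl '' H.neighborSet p ∪ .inr '' {i | R i p} := by
  ext (q | i) <;> simp

lemma glue_neighborSet_inr (i : W) :
    (glue H K R).neighborSet (.inr i) = .inl '' {p | R i p} ∪ .inr '' K.neighborSet i := by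
  ext (p | j) <;> simp

lemma encard_glue_neighborSet_inl (p : V) :
    ((glue H K R).neighborSet (.inl p)).encard =
      (H.neighborSet p).encard + {i | R i p}.encard := by
  rw [glue_neighborSet_inl, encard_union_eq disjoint_image_inl_image_inr,
    Sum.inl_injective.encard_image, Sum.inr_injective.encard_image]

lemma encard_glue_neighborSet_inr (i : W) :
    ((glue H K R).neighborSet (.inr i)).encard =
      {p | R i p}.encard + (K.neighborSet i).encard := by
  rw [glue_neighborSet_inr, encard_union_eq disjoint_image_inl_image_inr,
    Sum.inl_injective.encard_image, Sum.inr_injective.encard_image]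

lemma EdgesInTriangles.glue (hH : H.EdgesInTriangles) (hK : K.EdgesInTriangles)
    (hR : ∀ i p, R i p → ∃ j, K.Adj i j ∧ R j p) : (glue H K R).EdgesInTriangles := by
  rintro (p | i) (q | j) h
  · obtain ⟨r, hpr, hqr⟩ := hH p q h
    exact ⟨.inl r, hpr, hqr⟩
  · obtain ⟨k, hjk, hkp⟩ := hR j p h
    exact ⟨.inr k, hkp, hjk⟩
  · obtain ⟨k, hik, hkq⟩ := hR i q h
    exact ⟨.inr k, hik, hkq⟩
  · obtain ⟨k, hik, hjk⟩ := hK i j h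
    exact ⟨.inr k, hik, hjk⟩

end glue

def operation1 (G : SimpleGraph V) (x y z : V) : SimpleGraph (V ⊕ Fin 3) :=
  glue (G.deleteEdges {s(x, y), s(y, z), s(x, z)}) ⊤ fun i p => p ∈ triangleSides x y z i

lemma fromRel_eq_operation1 (G : SimpleGraph V) (x y z : V)
    {r : V ⊕ Fin 3 → V ⊕ Fin 3 → Prop}
    (hll : ∀ p q, r (.inl p) (.inl q) ↔
      G.Adj p q ∧ s(p, q) ∉ ({s(x, y), s(y, z), s(x, z)} : Set _))
    (hrl : ∀ i p, r (.inr i) (.inl p) ↔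
      (i = 0 ∧ (p = x ∨ p = y)) ∨ (i = 1 ∧ (p = y ∨ p = z)) ∨ (i = 2 ∧ (p = z ∨ p = x)))
    (hlr : ∀ p i, ¬r (.inl p) (.inr i)) (hrr : ∀ i j, r (.inr i) (.inr j)) :
    fromRel r = G.operation1 x y z := by
  ext (p | i) (q | j) <;>
    simp only [fromRel_adj, hll, hrl, hlr, hrr, operation1, glue_adj_inl_inl, glue_adj_inl_inr,
      glue_adj_inr_inl, glue_adj_inr_inr, deleteEdges_adj]
  · rw [G.adj_comm q, Sym2.eq_swap (a := q), or_self]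
    exact and_iff_right_of_imp fun h => Sum.inl_injective.ne h.1.ne
  · fin_cases j <;> simp [triangleSides, or_comm]
  · fin_cases i <;> simp [triangleSides, or_comm]
  · simp

variable {G : SimpleGraph V} {x y z : V}

lemma encard_operation1_neighborSet_inl (hxy : G.Adj x y) (hyz : G.Adj y z) (hxz : G.Adj x z)
    (p : V) : ((G.operation1 x y z).neighborSet (.inl p)).encard = (G.neighborSet p).encard := by
  have hT : {s(x, y), s(y, z), s(x, z)} ⊆ G.edgeSet := by
    rintro e (rfl | rfl | rfl) <;> assumption
  rw [operation1, encard_glue_neighborSet_inl,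
    ← Sym2.encard_setOf_mem_range_of_injective (triangleSides_injective hxy.ne hyz.ne hxz.ne),
    range_triangleSides, ← Sym2.encard_setOf_mk_mem, encard_neighborSet_deleteEdges_add hT]

lemma encard_operation1_neighborSet_inr (hxy : x ≠ y) (hyz : y ≠ z) (hxz : x ≠ z) (i : Fin 3) :
    ((G.operation1 x y z).neighborSet (.inr i)).encard = 4 := by
  rw [operation1, encard_glue_neighborSet_inr,
    Sym2.encard_setOf_mem (not_isDiag_triangleSides hxy hyz hxz i), neighborSet_top,
    ← Finset.coe_singleton, ← Finset.coe_compl, encard_coe_eq_coe_finsetCard,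
    Finset.card_compl, Finset.card_singleton]
  rfl

lemma EdgesInTriangles.operation1
    (h : (G.deleteEdges {s(x, y), s(y, z), s(x, z)}).EdgesInTriangles) :
    (G.operation1 x y z).EdgesInTriangles :=
  h.glue edgesInTriangles_top_fin_three fun _ _ hp => exists_ne_mem_triangleSides hp

end SimpleGraph

open SimpleGraph in
theorem operation1_preserves_triangle_property {V : Type*} (G : SimpleGraph V)
    (hreg : ∀ u : V, (G.neighborSet u).ncard = 4)
    (x y z : V) (hxy : G.Adj x y) (hyz : G.Adj y z) (hxz : G.Adj x z)
    (heligible : ∀ u v : V,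
      (G.deleteEdges {s(x, y), s(y, z), s(x, z)}).Adj u v →
      ∃ w : V, (G.deleteEdges {s(x, y), s(y, z), s(x, z)}).Adj u w ∧
        (G.deleteEdges {s(x, y), s(y, z), s(x, z)}).Adj v w) :
    let G' : SimpleGraph (V ⊕ Fin 3) :=
      SimpleGraph.fromRel (fun a b =>
        match a, b with
        | Sum.inl p, Sum.inl q =>
            G.Adj p q ∧ s(p, q) ∉ ({s(x, y), s(y, z), s(x, z)} : Set (Sym2 V))
        | Sum.inr i, Sum.inl p =>
            (i = 0 ∧ (p = x ∨ p = y)) ∨ (i = 1 ∧ (p = y ∨ p = z)) ∨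
              (i = 2 ∧ (p = z ∨ p = x))
        | Sum.inl _, Sum.inr _ => False
        | Sum.inr _, Sum.inr _ => True)
    (∀ a : V ⊕ Fin 3, (G'.neighborSet a).ncard = 4) ∧
      (∀ a b : V ⊕ Fin 3, G'.Adj a b → ∃ c : V ⊕ Fin 3, G'.Adj a c ∧ G'.Adj b c) := by
  intro G'
  rw [show G' = G.operation1 x y z from
    fromRel_eq_operation1 G x y z (fun _ _ => .rfl) (fun _ _ => .rfl) (fun _ _ => id)
      (fun _ _ => trivial)]
  have hdeg (p : V) : (G.neighborSet p).encard = 4 := by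
    have hfin : (G.neighborSet p).Finite := finite_of_ncard_ne_zero (by simp [hreg])
    rw [← hfin.cast_ncard_eq, hreg]
    rfl
  refine ⟨fun a => ?_, EdgesInTriangles.operation1 heligible⟩
  rw [ncard_def]
  rcases a with p | i
  · rw [encard_operation1_neighborSet_inl hxy hyz hxz, hdeg]
    rfl
  · rw [encard_operation1_neighborSet_inr hxy.ne hyz.ne hxz.ne]
    rfl
end

section
/- Let G be a connected 4-regular simple graph in which every edge lies in a triangle, containing an induced K₄⁻ on vertices {v₁,v₂,v₃,v₄} with missing edge v₁v₂, and suppose the remaining neighbours w₃ of v₃ and w₄ of v₄ are distinct. If G contains no subgraph isomorphic to the graph obtained from a triangle by Operation 1 (the 6-vertex prism-like replacement graph), then each of w₃ and w₄ is adjacent to exactly one of v₁, v₂, and not both to the same vertex. -/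
lemma embed_aux {V : Type*} (G : SimpleGraph V) (x y z u v w : V)
    (hxy : x ≠ y) (hxz : x ≠ z) (hxu : x ≠ u) (hxv : x ≠ v) (hxw : x ≠ w)
    (hyz : y ≠ z) (hyu : y ≠ u) (hyv : y ≠ v) (hyw : y ≠ w)
    (hzu : z ≠ u) (hzv : z ≠ v) (hzw : z ≠ w)
    (huv : u ≠ v) (huw : u ≠ w) (hvw : v ≠ w)
    (auv : G.Adj u v) (avw : G.Adj v w) (awu : G.Adj w u)
    (aux' : G.Adj u x) (auy : G.Adj u y) (avy : G.Adj v y) (avz : G.Adj v z)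
    (awz : G.Adj w z) (awx : G.Adj w x) :
    ∃ f : Fin 6 ↪ V, ∀ a b : Fin 6,
      (SimpleGraph.fromRel (fun i j : Fin 6 =>
        (i, j) ∈ ({(3, 4), (4, 5), (5, 3), (3, 0), (3, 1), (4, 1), (4, 2),
          (5, 2), (5, 0)} : Set (Fin 6 × Fin 6)))).Adj a b →
        G.Adj (f a) (f b) := by
  have auv' := auv.symm; have avw' := avw.symm; have awu' := awu.symm
  have aux'' := aux'.symm; have auy' := auy.symm; have avy' := avy.symm
  have avz' := avz.symm; have awz' := awz.symm; have awx' := awx.symm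
  refine ⟨⟨![x, y, z, u, v, w], ?_⟩, ?_⟩
  · intro a b hab
    fin_cases a <;> fin_cases b <;> first
      | rfl
      | (exfalso; simp at hab; tauto)
  · intro a b hab
    rw [SimpleGraph.fromRel_adj] at hab
    obtain ⟨hne, h⟩ := hab
    fin_cases a <;> fin_cases b <;>
      simp only [Set.mem_insert_iff, Set.mem_singleton_iff, Prod.mk.injEq] at h <;>
      first
        | (exact absurd h (by decide))
        | (simp only [Matrix.cons_val_zero, Matrix.cons_val_one, Matrix.head_cons,
            Matrix.cons_val_succ]; assumption)

lemma nbr_aux {V : Type*} (G : SimpleGraph V)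
    (hreg : ∀ u : V, (G.neighborSet u).ncard = 4)
    (x a b c d : V) (hab : a ≠ b) (hac : a ≠ c) (had : a ≠ d)
    (hbc : b ≠ c) (hbd : b ≠ d) (hcd : c ≠ d)
    (ha : G.Adj x a) (hb : G.Adj x b) (hc : G.Adj x c) (hd : G.Adj x d)
    (t : V) (ht : G.Adj x t) : t = a ∨ t = b ∨ t = c ∨ t = d := by
  have hsub : ({a, b, c, d} : Set V) ⊆ G.neighborSet x := by
    intro y hy
    rcases hy with rfl | rfl | rfl | rfl <;> assumption
  have hcard : ({a, b, c, d} : Set V).ncard = 4 := by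
    rw [Set.ncard_insert_of_notMem (by simp [hab, hac, had]),
        Set.ncard_insert_of_notMem (by simp [hbc, hbd]),
        Set.ncard_insert_of_notMem (by simp [hcd]), Set.ncard_singleton]
  have hfin : (G.neighborSet x).Finite := by
    by_contra hinf
    have := Set.Infinite.ncard hinf
    rw [hreg x] at this
    exact absurd this (by norm_num)
  have heq : ({a, b, c, d} : Set V) = G.neighborSet x :=
    Set.eq_of_subset_of_ncard_le hsub (by rw [hreg x, hcard]) hfin
  have htm : t ∈ G.neighborSet x := ht
  rw [← heq] at htm
  simpa using htm

/-- Suppose `G` is a connected quartic simple graph with the triangle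
property, containing an induced `K₄⁻` on `{v₁, v₂, v₃, v₄}` with missing edge
`v₁v₂`, and the remaining neighbours `w₃` of `v₃` and `w₄` of `v₄` are
distinct. If `G` contains no subgraph isomorphic to the 6-vertex graph on the
right-hand side of Operation 1 (vertices `x = 0, y = 1, z = 2, u = 3, v = 4,
w = 5`, triangle `uvw` and edges `ux, uy, vy, vz, wz, wx`), then each of `w₃`
and `w₄` is adjacent to exactly one of `v₁, v₂`, and not both to the same
vertex. -/
theorem K4minus_distinct_neighbors_attachment {V : Type*} (G : SimpleGraph V)
    (hconn : G.Connected)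
    (hreg : ∀ u : V, (G.neighborSet u).ncard = 4)
    (htri : ∀ u u' : V, G.Adj u u' → ∃ t : V, G.Adj u t ∧ G.Adj u' t)
    (v₁ v₂ v₃ v₄ : V)
    (hne : ¬ G.Adj v₁ v₂) (h12 : v₁ ≠ v₂)
    (h13 : G.Adj v₁ v₃) (h14 : G.Adj v₁ v₄) (h23 : G.Adj v₂ v₃)
    (h24 : G.Adj v₂ v₄) (h34 : G.Adj v₃ v₄)
    (w₃ w₄ : V) (hw3mem : w₃ ∉ ({v₁, v₂, v₃, v₄} : Set V))
    (hw4mem : w₄ ∉ ({v₁, v₂, v₃, v₄} : Set V))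
    (hw3 : G.Adj v₃ w₃) (hw4 : G.Adj v₄ w₄) (hww : w₃ ≠ w₄)
    (hnosub : ¬ ∃ f : Fin 6 ↪ V,
      ∀ a b : Fin 6,
        (SimpleGraph.fromRel (fun i j : Fin 6 =>
          (i, j) ∈ ({(3, 4), (4, 5), (5, 3), (3, 0), (3, 1), (4, 1), (4, 2),
            (5, 2), (5, 0)} : Set (Fin 6 × Fin 6)))).Adj a b →
          G.Adj (f a) (f b)) :
    ((G.Adj w₃ v₁ ∧ ¬ G.Adj w₃ v₂) ∨ (¬ G.Adj w₃ v₁ ∧ G.Adj w₃ v₂)) ∧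
    ((G.Adj w₄ v₁ ∧ ¬ G.Adj w₄ v₂) ∨ (¬ G.Adj w₄ v₁ ∧ G.Adj w₄ v₂)) ∧
    ¬ (G.Adj w₃ v₁ ∧ G.Adj w₄ v₁) ∧ ¬ (G.Adj w₃ v₂ ∧ G.Adj w₄ v₂) := by
  simp only [Set.mem_insert_iff, Set.mem_singleton_iff, not_or] at hw3mem hw4mem
  obtain ⟨hw31, hw32, hw33, hw34⟩ := hw3mem
  obtain ⟨hw41, hw42, hw43, hw44⟩ := hw4mem
  have d14 := h14.ne
  have d24 := h24.ne
  have d13 := h13.ne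
  have d23 := h23.ne
  have d34 := h34.ne
  -- neighbours of v₃ are exactly v₁, v₂, v₄, w₃
  have hN3 : ∀ t, G.Adj v₃ t → t = v₁ ∨ t = v₂ ∨ t = v₄ ∨ t = w₃ :=
    nbr_aux G hreg v₃ v₁ v₂ v₄ w₃ h12 d14 (Ne.symm hw31) d24 (Ne.symm hw32)
      (Ne.symm hw34) h13.symm h23.symm h34 hw3
  have hN4 : ∀ t, G.Adj v₄ t → t = v₁ ∨ t = v₂ ∨ t = v₃ ∨ t = w₄ :=
    nbr_aux G hreg v₄ v₁ v₂ v₃ w₄ h12 d13 (Ne.symm hw41) d23 (Ne.symm hw42)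
      (Ne.symm hw43) h14.symm h24.symm h34.symm hw4
  -- w₃ is not adjacent to v₄ and w₄ is not adjacent to v₃
  have hw3v4 : ¬ G.Adj v₄ w₃ := by
    intro h
    rcases hN4 w₃ h with rfl | rfl | rfl | rfl
    · exact hw31 rfl
    · exact hw32 rfl
    · exact hw33 rfl
    · exact hww rfl
  have hw4v3 : ¬ G.Adj v₃ w₄ := by
    intro h
    rcases hN3 w₄ h with rfl | rfl | rfl | rfl
    · exact hw41 rfl
    · exact hw42 rfl
    · exact hw44 rfl
    · exact hww rfl
  -- step 1: w₃ adjacent to v₁ or v₂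
  have hA : G.Adj w₃ v₁ ∨ G.Adj w₃ v₂ := by
    obtain ⟨t, ht3, htw⟩ := htri v₃ w₃ hw3
    rcases hN3 t ht3 with rfl | rfl | rfl | rfl
    · exact Or.inl htw
    · exact Or.inr htw
    · exact absurd htw.symm hw3v4
    · exact (htw.ne rfl).elim
  have hB : G.Adj w₄ v₁ ∨ G.Adj w₄ v₂ := by
    obtain ⟨t, ht4, htw⟩ := htri v₄ w₄ hw4
    rcases hN4 t ht4 with rfl | rfl | rfl | rfl
    · exact Or.inl htw
    · exact Or.inr htw
    · exact absurd htw.symm hw4v3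
    · exact (htw.ne rfl).elim
  -- step 2: not both adjacent to v₁
  have hC1 : ¬ (G.Adj w₃ v₁ ∧ G.Adj w₄ v₁) := by
    rintro ⟨ha1, hb1⟩
    exact hnosub (embed_aux G w₃ v₂ w₄ v₃ v₄ v₁ hw32 hww hw33
      hw34 hw31 (Ne.symm hw42) d23 d24 (Ne.symm h12)
      hw43 hw44 hw41 d34 (Ne.symm d13) (Ne.symm d14)
      h34 h14.symm h13 hw3 h23.symm h24.symm hw4 hb1.symm ha1.symm)
  have hC2 : ¬ (G.Adj w₃ v₂ ∧ G.Adj w₄ v₂) := by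
    rintro ⟨ha2, hb2⟩
    exact hnosub (embed_aux G w₃ v₁ w₄ v₃ v₄ v₂ hw31 hww hw33
      hw34 hw32 (Ne.symm hw41) d13 d14 h12
      hw43 hw44 hw42 d34 (Ne.symm d23) (Ne.symm d24)
      h34 h24.symm h23 hw3 h13.symm h14.symm hw4 hb2.symm ha2.symm)
  refine ⟨?_, ?_, hC1, hC2⟩
  · rcases hA with h1 | h2
    · left
      refine ⟨h1, fun h2 => ?_⟩
      rcases hB with hb1 | hb2
      · exact hC1 ⟨h1, hb1⟩
      · exact hC2 ⟨h2, hb2⟩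
    · right
      refine ⟨fun h1 => ?_, h2⟩
      rcases hB with hb1 | hb2
      · exact hC1 ⟨h1, hb1⟩
      · exact hC2 ⟨h2, hb2⟩
  · rcases hB with h1 | h2
    · left
      refine ⟨h1, fun h2 => ?_⟩
      rcases hA with ha1 | ha2
      · exact hC1 ⟨ha1, h1⟩
      · exact hC2 ⟨ha2, h2⟩
    · right
      refine ⟨fun h1 => ?_, h2⟩
      rcases hA with ha1 | ha2
      · exact hC1 ⟨ha1, h1⟩
      · exact hC2 ⟨ha2, h2⟩
end
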